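/- Let σ₀ = ½(ρ_{0+} + ρ_{0×}) and σ₁ = ½(ρ_{1+} + ρ_{1×}), where ρ_{y b} = 2^{−(n−1)} Σ_{x : ⊕x = y} U_b|x⟩⟨x|U_b† with U_+ = I^{⊗n}, U_× = H^{⊗n}, and ⊕x the XOR of the bits of x. Then ‖σ₀^{(n+2)} − σ₁^{(n+2)}‖₁ = ‖σ₀^{(n)} − σ₁^{(n)}‖₁ for all n ≥ 1. -/

import Mathlib

open Matrix
open scoped ComplexOrder

/-- The trace norm `‖A‖₁ = Tr √(AᴴA)`. -/
noncomputable def traceNorm {ι : Type*} [Fintype ι] [DecidableEq ι]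
    (A : Matrix ι ι ℂ) : ℝ :=
  (((Matrix.posSemidef_conjTranspose_mul_self A).1.eigenvectorUnitary.1 *
      diagonal (((↑) : ℝ → ℂ) ∘ (√·) ∘ (Matrix.posSemidef_conjTranspose_mul_self A).1.eigenvalues) *
      (star (Matrix.posSemidef_conjTranspose_mul_self A).1.eigenvectorUnitary : Matrix ι ι ℂ)).trace).re

/-- The `n`-fold tensor power `H^{⊗n}` of the Hadamard matrix, with entries
`H^{⊗n}(x,y) = (∏ᵢ (−1)^{xᵢ yᵢ}) / (√2)ⁿ`. -/
noncomputable def Hn (n : ℕ) : Matrix (Fin n → Bool) (Fin n → Bool) ℂ :=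
  fun x y => (∏ i, if x i && y i then (-1 : ℂ) else 1) / (Real.sqrt 2 : ℂ) ^ n

/-- The XOR of the bits of the string `x`. -/
def xorf {n : ℕ} (x : Fin n → Bool) : Bool := (List.ofFn x).foldr xor false

/-- `ρ_{y,+} = 2^{−(n−1)} Σ_{⊕x = y} |x⟩⟨x|`. -/
noncomputable def rhoXorP (n : ℕ) (y : Bool) : Matrix (Fin n → Bool) (Fin n → Bool) ℂ :=
  ((2 : ℂ) ^ (n - 1))⁻¹ •
    ∑ x ∈ Finset.univ.filter (fun x => xorf x = y), Matrix.single x x 1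

/-- `ρ_{y,×} = 2^{−(n−1)} Σ_{⊕x = y} H^{⊗n}|x⟩⟨x|H^{⊗n}†`. -/
noncomputable def rhoXorT (n : ℕ) (y : Bool) : Matrix (Fin n → Bool) (Fin n → Bool) ℂ :=
  ((2 : ℂ) ^ (n - 1))⁻¹ •
    ∑ x ∈ Finset.univ.filter (fun x => xorf x = y),
      Hn n * Matrix.single x x 1 * (Hn n)ᴴ

/-- `σ_y = ½(ρ_{y,+} + ρ_{y,×})`. -/
noncomputable def sigmaXor (n : ℕ) (y : Bool) : Matrix (Fin n → Bool) (Fin n → Bool) ℂ :=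
  (1/2 : ℂ) • (rhoXorP n y + rhoXorT n y)

/-! Let `E = diag((-1)^{⊕x}) = Z^{⊗n}` and `F = H^{⊗n} E H^{⊗n} = X^{⊗n}`, the permutation
matrix of the bit flip `x ↦ xᶜ`. Then `σ₀ - σ₁ = 2⁻ⁿ (E + F)`, where `E` and `F` are Hermitian
involutions with `F E = (-1)ⁿ E F`. For odd `n` they anticommute, so `(E + F)² = 2` and the trace
norm is `√2`. For even `n` they commute, `|E + F| = 1 + E F`, and `E F` is traceless because the
bit flip has no fixed points, so the trace norm is `1`. Either way it depends only on the parity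
of `n`. -/

section TraceNorm

variable {ι : Type*} [Fintype ι] [DecidableEq ι]

open scoped MatrixOrder

theorem traceNorm_eq_re_trace_of_mul_self_eq {A S : Matrix ι ι ℂ} (hS : S.PosSemidef)
    (h : S * S = Aᴴ * A) : traceNorm A = S.trace.re := by
  have hA := posSemidef_conjTranspose_mul_self A
  have hsqrt : CFC.sqrt (Aᴴ * A) = S := CFC.sqrt_unique h hS.nonneg
  rw [← hsqrt, CFC.sqrt_eq_real_sqrt _ hA.nonneg, cfcₙ_eq_cfc, hA.1.cfc_eq, IsHermitian.cfc,
    Unitary.conjStarAlgAut_apply]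
  rfl

theorem traceNorm_real_smul (A : Matrix ι ι ℂ) {c : ℝ} (hc : 0 ≤ c) :
    traceNorm ((c : ℂ) • A) = c * traceNorm A := by
  have hA := posSemidef_conjTranspose_mul_self A
  set S := CFC.sqrt (Aᴴ * A)
  have hS : S.PosSemidef := (CFC.sqrt_nonneg _).posSemidef
  have hSS : S * S = Aᴴ * A := CFC.sqrt_mul_sqrt_self _ hA.nonneg
  rw [traceNorm_eq_re_trace_of_mul_self_eq hS hSS,
    traceNorm_eq_re_trace_of_mul_self_eq (S := (c : ℂ) • S) (hS.smul (by exact_mod_cast hc))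
      (by simp [hSS, conjTranspose_smul, smul_smul])]
  simp [trace_smul]

theorem traceNorm_add_of_anticommute {E F : Matrix ι ι ℂ} (hE : E.IsHermitian)
    (hF : F.IsHermitian) (hE2 : E * E = 1) (hF2 : F * F = 1) (h : E * F = -(F * E)) :
    traceNorm (E + F) = √2 * Fintype.card ι := by
  have hsq : (E + F)ᴴ * (E + F) = (2 : ℂ) • 1 := by
    rw [conjTranspose_add, hE.eq, hF.eq, add_mul, mul_add, mul_add, hE2, hF2, h, two_smul]
    abel
  have hsqrt2 : ((√2 : ℝ) : ℂ) * (√2 : ℝ) = 2 := by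
    rw [← Complex.ofReal_mul, Real.mul_self_sqrt zero_le_two]
    norm_num
  rw [traceNorm_eq_re_trace_of_mul_self_eq (S := ((√2 : ℝ) : ℂ) • 1)
    (PosSemidef.one.smul (by positivity)) (by rw [hsq, smul_mul_smul, one_mul, hsqrt2])]
  simp [trace_smul]

theorem traceNorm_add_of_commute {E F : Matrix ι ι ℂ} (hE : E.IsHermitian)
    (hF : F.IsHermitian) (hE2 : E * E = 1) (hF2 : F * F = 1) (h : Commute E F) :
    traceNorm (E + F) = Fintype.card ι + (E * F).trace.re := by
  have hEF : (E * F) * (E * F) = 1 := by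
    rw [mul_assoc, ← mul_assoc F, ← h.eq, mul_assoc, hF2, mul_one, hE2]
  have hSS : (1 + E * F) * (1 + E * F) = (E + F)ᴴ * (E + F) := by
    rw [conjTranspose_add, hE.eq, hF.eq]
    simp only [add_mul, mul_add, one_mul, mul_one, hEF, hE2, hF2, ← h.eq]
  have hSherm : (1 + E * F)ᴴ = 1 + E * F := by
    rw [conjTranspose_add, conjTranspose_one, conjTranspose_mul, hE.eq, hF.eq, h.eq]
  have hS : (1 + E * F).PosSemidef := by
    have hhalf : 1 + E * F = ((1 / 2 : ℝ) : ℂ) • ((1 + E * F)ᴴ * (1 + E * F)) := by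
      rw [hSherm, hSS, conjTranspose_add, hE.eq, hF.eq, add_mul, mul_add, mul_add, hE2, hF2,
        ← h.eq]
      module
    rw [hhalf]
    exact (posSemidef_conjTranspose_mul_self _).smul (by positivity)
  rw [traceNorm_eq_re_trace_of_mul_self_eq hS hSS]
  simp [trace_add]

variable {R : Type*} [Semiring R]

theorem permMatrix_mul_diagonal (σ : Equiv.Perm ι) (d : ι → R) :
    σ.permMatrix R * diagonal d = diagonal (d ∘ σ) * σ.permMatrix R := by
  ext i j
  by_cases h : σ i = j <;> simp [PEquiv.toMatrix_apply, h]

theorem trace_diagonal_mul_permMatrix_eq_zero {σ : Equiv.Perm ι} (hσ : ∀ i, σ i ≠ i)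
    (d : ι → R) : (diagonal d * σ.permMatrix R).trace = 0 :=
  Finset.sum_eq_zero fun i _ => by simp [PEquiv.toMatrix_apply, hσ i]

end TraceNorm

theorem xorf_succ {n : ℕ} (x : Fin (n + 1) → Bool) :
    xorf x = xor (x 0) (xorf fun i => x i.succ) := by
  simp [xorf, List.ofFn_succ]

noncomputable def xorSign {n : ℕ} (x : Fin n → Bool) : ℂ := if xorf x then -1 else 1

theorem xorSign_eq_prod {n : ℕ} (x : Fin n → Bool) :
    xorSign x = ∏ i, if x i then -1 else 1 := by
  induction n with
  | zero => simp [xorSign, xorf]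
  | succ n ih =>
    rw [Fin.prod_univ_succ, ← ih, xorSign, xorSign, xorf_succ]
    cases x 0 <;> cases xorf fun i => x i.succ <;> simp

theorem xorSign_compl {n : ℕ} (x : Fin n → Bool) : xorSign xᶜ = (-1) ^ n * xorSign x := by
  have hflip (b : Bool) : (if !b then (-1 : ℂ) else 1) = -(if b then -1 else 1) := by
    cases b <;> simp
  simp only [xorSign_eq_prod, Pi.compl_apply, Bool.compl_eq_bnot, hflip, Finset.prod_neg,
    Finset.card_univ, Fintype.card_fin]

theorem xorSign_mul_self {n : ℕ} (x : Fin n → Bool) : xorSign x * xorSign x = 1 := by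
  unfold xorSign
  split <;> norm_num

theorem star_xorSign {n : ℕ} (x : Fin n → Bool) : star (xorSign x) = xorSign x := by
  unfold xorSign
  split <;> simp

def bitFlip (n : ℕ) : Equiv.Perm (Fin n → Bool) := Function.Involutive.toPerm _ compl_involutive

theorem bitFlip_mul_self (n : ℕ) : bitFlip n * bitFlip n = 1 :=
  Equiv.ext compl_compl

theorem xorSign_comp_bitFlip (n : ℕ) : xorSign ∘ bitFlip n = (-1 : ℂ) ^ n • xorSign :=
  funext xorSign_compl

theorem conjTranspose_Hn (n : ℕ) : (Hn n)ᴴ = Hn n := by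
  ext x y
  simp [Hn, conjTranspose_apply, Bool.and_comm, apply_ite]

theorem Hn_mul_diagonal_xorSign_mul_conjTranspose (n : ℕ) :
    Hn n * diagonal xorSign * (Hn n)ᴴ = (bitFlip n).permMatrix ℂ := by
  let s : Bool → ℂ := fun b => if b then -1 else 1
  have hsqrt : ((√2 : ℝ) : ℂ) ^ n * ((√2 : ℝ) : ℂ) ^ n = 2 ^ n := by
    rw [← mul_pow, ← Complex.ofReal_mul, Real.mul_self_sqrt zero_le_two]
    norm_num
  have hbit (a b : Bool) : ∑ c, s (a && c) * s c * s (b && c) = if b = !a then 2 else 0 := by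
    cases a <;> cases b <;> norm_num [s]
  ext u v
  calc (Hn n * diagonal xorSign * (Hn n)ᴴ : Matrix _ _ ℂ) u v
      = (∑ x : Fin n → Bool, ∏ i, s (u i && x i) * s (x i) * s (v i && x i)) / 2 ^ n := by
        rw [conjTranspose_Hn, mul_apply, Finset.sum_div]
        refine Finset.sum_congr rfl fun x _ => ?_
        simp only [mul_diagonal, Hn, xorSign_eq_prod, Bool.and_comm (x _)]
        rw [← hsqrt, Finset.prod_mul_distrib, Finset.prod_mul_distrib]
        field_simp
        rfl
    _ = (∏ i, if v i = !u i then 2 else 0) / 2 ^ n := by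
        rw [← Fintype.prod_sum fun i c => s (u i && c) * s c * s (v i && c)]
        simp only [hbit]
    _ = (bitFlip n).permMatrix ℂ u v := by
        rw [Finset.prod_ite_zero, Finset.prod_const, Finset.card_univ, Fintype.card_fin]
        have hflip : bitFlip n u = v ↔ ∀ i ∈ Finset.univ, v i = !u i := by
          simp [bitFlip, funext_iff, eq_comm]
        simp only [PEquiv.toMatrix_apply, Equiv.toPEquiv_apply, Option.mem_def, Option.some.injEq,
          hflip]
        split_ifs <;> simp

theorem sum_filter_xorf_sub {n : ℕ} {M : Type*} [AddCommGroup M] [Module ℂ M]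
    (g : (Fin n → Bool) → M) :
    ∑ x ∈ Finset.univ.filter (fun x => xorf x = false), g x
      - ∑ x ∈ Finset.univ.filter (fun x => xorf x = true), g x
      = ∑ x, xorSign x • g x := by
  rw [Finset.sum_filter, Finset.sum_filter, ← Finset.sum_sub_distrib]
  refine Finset.sum_congr rfl fun x _ => ?_
  cases h : xorf x <;> simp [xorSign, h]

theorem sigmaXor_false_sub_true {n : ℕ} (hn : 1 ≤ n) :
    sigmaXor n false - sigmaXor n true
      = (((2 ^ n)⁻¹ : ℝ) : ℂ) • (diagonal xorSign + (bitFlip n).permMatrix ℂ) := by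
  have hscalar : (1 / 2 : ℂ) * ((2 : ℂ) ^ (n - 1))⁻¹ = (((2 ^ n)⁻¹ : ℝ) : ℂ) := by
    obtain ⟨m, rfl⟩ := Nat.exists_eq_add_of_le' hn
    push_cast
    rw [pow_succ, mul_inv]
    ring
  have hdiag : ∑ x : Fin n → Bool, xorSign x • single x x (1 : ℂ) = diagonal xorSign := by
    simp [smul_single, sum_single_eq_diagonal]
  have hconj : ∑ x : Fin n → Bool, xorSign x • (Hn n * single x x 1 * (Hn n)ᴴ)
      = (bitFlip n).permMatrix ℂ := by
    simp only [← Hn_mul_diagonal_xorSign_mul_conjTranspose, ← hdiag, Finset.mul_sum,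
      Finset.sum_mul, Matrix.mul_smul, Matrix.smul_mul]
  rw [← hdiag, ← hconj, ← sum_filter_xorf_sub, ← sum_filter_xorf_sub, ← hscalar]
  unfold sigmaXor rhoXorP rhoXorT
  module

theorem traceNorm_sigmaXor_false_sub_true {n : ℕ} (hn : 1 ≤ n) :
    traceNorm (sigmaXor n false - sigmaXor n true) = if Even n then 1 else √2 := by
  set E : Matrix (Fin n → Bool) (Fin n → Bool) ℂ := diagonal xorSign
  set F : Matrix (Fin n → Bool) (Fin n → Bool) ℂ := (bitFlip n).permMatrix ℂ
  have hE : E.IsHermitian := isHermitian_diagonal_of_self_adjoint _ (funext star_xorSign)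
  have hF : F.IsHermitian := by
    rw [IsHermitian, conjTranspose_permMatrix, inv_eq_of_mul_eq_one_right (bitFlip_mul_self n)]
  have hE2 : E * E = 1 := by simp [E, diagonal_mul_diagonal, xorSign_mul_self]
  have hF2 : F * F = 1 := by rw [← permMatrix_mul, bitFlip_mul_self, permMatrix_one]
  have hFE : F * E = (-1 : ℂ) ^ n • (E * F) := by
    rw [permMatrix_mul_diagonal, xorSign_comp_bitFlip, diagonal_smul, Matrix.smul_mul]
  have hfree : ∀ x, bitFlip n x ≠ x := by
    have : Nonempty (Fin n) := ⟨⟨0, hn⟩⟩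
    exact fun x => compl_ne_self
  have hcard : (Fintype.card (Fin n → Bool) : ℝ) = 2 ^ n := by simp
  rw [sigmaXor_false_sub_true hn, traceNorm_real_smul _ (by positivity)]
  rcases n.even_or_odd with heven | hodd
  · rw [traceNorm_add_of_commute hE hF hE2 hF2
        (by rw [Commute, SemiconjBy, hFE, heven.neg_one_pow, one_smul]),
      trace_diagonal_mul_permMatrix_eq_zero hfree, Complex.zero_re, add_zero, hcard,
      if_pos heven]
    field_simp
  · rw [traceNorm_add_of_anticommute hE hF hE2 hF2
        (by rw [hFE, hodd.neg_one_pow, neg_one_smul, neg_neg]),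
      hcard, if_neg (Nat.not_even_iff_odd.mpr hodd)]
    field_simp

/-- The trace distance for the XOR discrimination problem is the same for
strings of length `n` and length `n + 2`. -/
theorem traceNorm_sigmaXor_succ_succ {n : ℕ} (hn : 1 ≤ n) :
    traceNorm (sigmaXor (n + 2) false - sigmaXor (n + 2) true)
      = traceNorm (sigmaXor n false - sigmaXor n true) := by
  rw [traceNorm_sigmaXor_false_sub_true (by omega), traceNorm_sigmaXor_false_sub_true hn]
  simp only [Nat.even_add, even_two, iff_true]
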